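/- The action of N on Λ extends to a continuous action ν : N × Λ̄ → Λ̄ on the compactified apartment: the Weyl group W (permutation matrices) acts by w(η_i^I) = η_{w(i)}^{w(I)} on each boundary component Λ_I, and t ∈ T acts on Λ_I by translation by ν_I(ρ_I(t)); moreover for every w ∈ W, t ∈ T, bounded open U ⊂ Λ and nonempty I ⊂ n̲ one has ν(w)(C_U^I) = C_{ν(w)(U)}^{w(I)} and ν(t)(C_U^I) = C_{ν(t)(U)}^I. -/

import Mathlib

open Set Pointwise Topology Filter

namespace CompApp

variable {n : ℕ}

/-- The component `Λ_I`: the quotient of the functions `I → ℝ` by the line of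
constants (so `Λ_I = Σ_{i∈I} ℝ η_i^I` with the relation `Σ_{i∈I} η_i^I = 0`). -/
abbrev Comp (I : Finset (Fin n)) : Type :=
  (↥I → ℝ) ⧸ (Submodule.span ℝ {(1 : ↥I → ℝ)})

/-- quotient map onto a component -/
noncomputable def mkC (I : Finset (Fin n)) : (↥I → ℝ) →ₗ[ℝ] Comp I :=
  Submodule.mkQ _

/-- The apartment `Λ` itself, i.e. the component for `I = {1,…,n}`. -/
abbrev Apt (n : ℕ) : Type := Comp (Finset.univ : Finset (Fin n))

/-- restriction of functions from `{1,…,n}` to `J` -/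
def resL (J : Finset (Fin n)) :
    ((↥(Finset.univ : Finset (Fin n)) → ℝ)) →ₗ[ℝ] (↥J → ℝ) :=
  LinearMap.funLeft ℝ ℝ (fun j => ⟨j.1, Finset.mem_univ _⟩)

/-- The projection `r_J : Λ → Λ_J`, `Σ x_i η_i ↦ Σ_{i∈J} x_i η_i^J`. -/
noncomputable def resQ (J : Finset (Fin n)) : Apt n →ₗ[ℝ] Comp J :=
  Submodule.mapQ _ _ (resL J) (by
    rw [Submodule.span_le]
    intro x hx
    rw [Set.mem_singleton_iff] at hx
    subst hx
    exact Submodule.mem_comap.mpr (Submodule.subset_span rfl))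

variable [NeZero n]

/-- The compactified apartment `Λ̄ = ⋃_{∅≠I⊆{1,…,n}} Λ_I` as a set. -/
def CApt (n : ℕ) : Type := Σ I : {I : Finset (Fin n) // I.Nonempty}, Comp I.1

/-- The embedding `Λ ↪ Λ̄`. -/
def emb (z : Apt n) : CApt n := ⟨⟨Finset.univ, Finset.univ_nonempty⟩, z⟩

/-- The point of the boundary component `Λ_I` inside `Λ̄`. -/
def embC (I : Finset (Fin n)) (hI : I.Nonempty) (y : Comp I) : CApt n := ⟨⟨I, hI⟩, y⟩

/-- The cone `D_I = Σ_{i∉I} ℝ_{≥0}(−η_i) ⊆ Λ`. -/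
noncomputable def cone (I : Finset (Fin n)) : Set (Apt n) :=
  (mkC _) '' {x | (∀ l : ↥(Finset.univ : Finset (Fin n)), (l : Fin n) ∈ I → x l = 0) ∧
    ∀ l : ↥(Finset.univ : Finset (Fin n)), (l : Fin n) ∉ I → x l ≤ 0}

/-- The basic open set `C_U^I = ⋃_{I ⊆ J} r_J(U + D_I) ⊆ Λ̄`. -/
noncomputable def CUI (U : Set (Apt n)) (I : Finset (Fin n)) : Set (CApt n) :=
  {p | I ⊆ p.1.1 ∧ p.2 ∈ resQ p.1.1 '' (U + cone I)}

/-- Boundedness for subsets of the apartment `Λ`. -/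
def BoundedA (U : Set (Apt n)) : Prop :=
  ∃ t : Set (↥(Finset.univ : Finset (Fin n)) → ℝ),
    Bornology.IsBounded t ∧ U ⊆ (mkC _) '' t

/-- The topology of `Λ̄`: generated by the open subsets of `Λ` together with the
sets `C_U^I` for nonempty proper `I` and bounded open `U ⊆ Λ`. -/
noncomputable instance : TopologicalSpace (CApt n) :=
  TopologicalSpace.generateFrom
    ({s | ∃ U : Set (Apt n), IsOpen U ∧ s = emb '' U} ∪
     {s | ∃ (U : Set (Apt n)) (I : Finset (Fin n)), I.Nonempty ∧ I ≠ Finset.univ ∧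
        IsOpen U ∧ BoundedA U ∧ s = CUI U I})

/-- The root `a_{ij} = χ_i − χ_j` as a linear functional on `Λ`. -/
noncomputable def aFun (i j : Fin n) : Apt n →ₗ[ℝ] ℝ :=
  Submodule.liftQ _
    (LinearMap.proj (⟨i, Finset.mem_univ i⟩ : ↥(Finset.univ : Finset (Fin n))) -
      LinearMap.proj ⟨j, Finset.mem_univ j⟩) (by
    rw [Submodule.span_le]
    intro x hx
    rw [Set.mem_singleton_iff] at hx
    subst hx
    simp [LinearMap.mem_ker])

/-- The root `b_{ij}` of the component `Λ_I` (for `i, j ∈ I`). -/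
noncomputable def bFun (I : Finset (Fin n)) (i j : ↥I) : Comp I →ₗ[ℝ] ℝ :=
  Submodule.liftQ _
    (LinearMap.proj (R := ℝ) (φ := fun _ : ↥I => ℝ) i -
      LinearMap.proj (R := ℝ) (φ := fun _ : ↥I => ℝ) j) (by
    rw [Submodule.span_le]
    intro x hx
    rw [Set.mem_singleton_iff] at hx
    subst hx
    simp [LinearMap.mem_ker])

/-- The closure in `Λ̄` of the half-space `{ z ∈ Λ : a_{ij}(z) ≥ s }`. -/
noncomputable def halfCl (i j : Fin n) (s : ℝ) : Set (CApt n) :=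
  closure (emb '' {z : Apt n | s ≤ aFun i j z})

/-- `f_Ω(a) = inf{ t : Ω ⊆ closure{ z ∈ Λ : a(z) ≥ −t } } ∈ ℝ ∪ {±∞}`,
for `a = a_{ij}` (with `inf ∅ = +∞`). -/
noncomputable def fO (Ω : Set (CApt n)) (i j : Fin n) : EReal :=
  sInf {t : EReal | ∃ s : ℝ, t = (s : EReal) ∧ Ω ⊆ halfCl i j (-s)}

/-- For `w` in the Weyl group (a permutation of `{1,…,n}`) and `j ∈ w(J)`, the
index `w⁻¹(j) ∈ J`. -/
def permIdx {n : ℕ} (w : Equiv.Perm (Fin n)) (J : Finset (Fin n))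
    (j : ↥(J.image w)) : ↥J :=
  ⟨w.symm j, by
    obtain ⟨a, ha, hwa⟩ := Finset.mem_image.mp j.2
    rw [← hwa]
    simpa using ha⟩

/-- The action of `w ∈ W` on the component `Λ_J`: `w(η_i^J) = η_{w(i)}^{w(J)}`. -/
noncomputable def permC {n : ℕ} (w : Equiv.Perm (Fin n)) (J : Finset (Fin n)) :
    Comp J →ₗ[ℝ] Comp (J.image w) :=
  Submodule.mapQ _ _ (LinearMap.funLeft ℝ ℝ (permIdx w J)) (by
    rw [Submodule.span_le]
    intro x hx
    rw [Set.mem_singleton_iff] at hx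
    subst hx
    exact Submodule.mem_comap.mpr (Submodule.subset_span rfl))

/-- The action of `w ∈ W` on the apartment `Λ`. -/
noncomputable def permA {n : ℕ} (w : Equiv.Perm (Fin n)) : Apt n →ₗ[ℝ] Apt n :=
  Submodule.mapQ _ _
    (LinearMap.funLeft ℝ ℝ
      (fun l : ↥(Finset.univ : Finset (Fin n)) => ⟨w.symm l, Finset.mem_univ _⟩)) (by
    rw [Submodule.span_le]
    intro x hx
    rw [Set.mem_singleton_iff] at hx
    subst hx
    exact Submodule.mem_comap.mpr (Submodule.subset_span rfl))

/-- The action of `w ∈ W` on the compactified apartment `Λ̄`, sending `Λ_J` to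
`Λ_{w(J)}` by `η_i^J ↦ η_{w(i)}^{w(J)}`. -/
noncomputable def permAct {n : ℕ} [NeZero n] (w : Equiv.Perm (Fin n)) :
    CApt n → CApt n :=
  fun p => ⟨⟨p.1.1.image w, p.1.2.image w⟩, permC w p.1.1 p.2⟩

/-- The action of a torus element `t ∈ T` with `ν(t) = λ ∈ Λ` on the
compactified apartment: on `Λ_J` it is translation by `ν_J(ρ_J(t)) = r_J(λ)`. -/
noncomputable def transAct {n : ℕ} [NeZero n] (lam : Apt n) : CApt n → CApt n :=
  fun p => ⟨p.1, p.2 + resQ p.1.1 lam⟩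

end CompApp

/-!
Both actions are bijections of `Λ̄` whose inverses (`w⁻¹`, resp. translation by `-λ`) are
actions of the same kind, so each is continuous as soon as each action carries the generating
open sets `emb '' U` and `C_U^I` to generating open sets. This holds because `w` and
translations are homeomorphisms of `Λ` preserving boundedness, they commute with the
projections (`w ∘ r_J = r_{w(J)} ∘ w`, and `r_J` is additive), and `w` maps the cone `D_I`
into `D_{w(I)}`.
-/

theorem continuous_generateFrom_of_isOpen_image {X Y : Type*} [TopologicalSpace X]
    {S : Set (Set Y)} {f : X → Y} {g : Y → X} (hfg : Function.LeftInverse f g)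
    (hgf : Function.RightInverse f g) (hS : ∀ s ∈ S, IsOpen (g '' s)) :
    Continuous[_, TopologicalSpace.generateFrom S] f := by
  rw [continuous_generateFrom_iff]
  intro s hs
  rw [← Set.image_eq_preimage_of_inverse hfg hgf]
  exact hS s hs

theorem Set.image_eq_of_mapsTo_of_rightInverse {α β : Type*} {f : α → β} {g : β → α}
    {s : Set α} {t : Set β} (hf : Set.MapsTo f s t) (hg : Set.MapsTo g t s)
    (hfg : Function.RightInverse g f) : f '' s = t :=
  (hf.image_subset).antisymm fun y hy => ⟨g y, hg hy, hfg y⟩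

namespace CompApp

variable {n : ℕ}

theorem mkC_surjective (J : Finset (Fin n)) : Function.Surjective (mkC J) :=
  Submodule.Quotient.mk_surjective _

theorem permA_mkC (w : Equiv.Perm (Fin n)) (x : ↥(Finset.univ : Finset (Fin n)) → ℝ) :
    permA w (mkC _ x) = mkC _ (fun l => x ⟨w.symm l, Finset.mem_univ _⟩) :=
  rfl

theorem resQ_univ (z : Apt n) : resQ Finset.univ z = z := by
  obtain ⟨x, rfl⟩ := mkC_surjective _ z
  rfl

theorem permC_resQ (w : Equiv.Perm (Fin n)) (J : Finset (Fin n)) (z : Apt n) :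
    permC w J (resQ J z) = resQ (J.image w) (permA w z) := by
  obtain ⟨x, rfl⟩ := mkC_surjective _ z
  rfl

theorem permA_inv_permA (w : Equiv.Perm (Fin n)) (z : Apt n) :
    permA w⁻¹ (permA w z) = z := by
  obtain ⟨x, rfl⟩ := mkC_surjective _ z
  simp only [permA_mkC, Equiv.Perm.inv_def, Equiv.symm_symm, Equiv.symm_apply_apply]

theorem permA_permA_inv (w : Equiv.Perm (Fin n)) (z : Apt n) :
    permA w (permA w⁻¹ z) = z := by
  simpa using permA_inv_permA w⁻¹ z

theorem permA_image_cone_subset (w : Equiv.Perm (Fin n)) (I : Finset (Fin n)) :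
    permA w '' cone I ⊆ cone (I.image w) := by
  rintro _ ⟨_, ⟨x, ⟨hx_mem, hx_nonpos⟩, rfl⟩, rfl⟩
  refine ⟨_, ⟨fun l hl => hx_mem _ ?_, fun l hl => hx_nonpos _ ?_⟩, (permA_mkC w x).symm⟩
  · obtain ⟨i, hi, hil⟩ := Finset.mem_image.mp hl
    simpa [← hil] using hi
  · exact fun hmem => hl (by simpa using Finset.mem_image_of_mem w hmem)

theorem continuous_permA (w : Equiv.Perm (Fin n)) : Continuous (permA w) := by
  have hq : Topology.IsQuotientMap (mkC (Finset.univ : Finset (Fin n))) :=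
    (Submodule.isOpenQuotientMap_mkQ _).isQuotientMap
  rw [hq.continuous_iff]
  exact hq.continuous.comp (continuous_pi fun l => continuous_apply _)

theorem isOpen_permA_image (w : Equiv.Perm (Fin n)) {U : Set (Apt n)} (hU : IsOpen U) :
    IsOpen (permA w '' U) := by
  rw [Set.image_eq_preimage_of_inverse (permA_inv_permA w) (permA_permA_inv w)]
  exact hU.preimage (continuous_permA w⁻¹)

theorem BoundedA.image_of_lipschitz {U : Set (Apt n)} (hU : BoundedA U) {f : Apt n → Apt n}
    {F : (↥(Finset.univ : Finset (Fin n)) → ℝ) → ↥(Finset.univ : Finset (Fin n)) → ℝ}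
    {K : NNReal} (hF : LipschitzWith K F) (hfF : ∀ x, f (mkC _ x) = mkC _ (F x)) :
    BoundedA (f '' U) := by
  obtain ⟨t, ht, hUt⟩ := hU
  refine ⟨F '' t, hF.isBounded_image ht, ?_⟩
  rintro _ ⟨u, hu, rfl⟩
  obtain ⟨x, hx, rfl⟩ := hUt hu
  exact ⟨F x, Set.mem_image_of_mem F hx, (hfF x).symm⟩

theorem BoundedA.permA_image (w : Equiv.Perm (Fin n)) {U : Set (Apt n)} (hU : BoundedA U) :
    BoundedA (permA w '' U) :=
  hU.image_of_lipschitz (LinearMap.toContinuousLinearMap (LinearMap.funLeft ℝ ℝ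
    (fun l : ↥(Finset.univ : Finset (Fin n)) => ⟨w.symm l, Finset.mem_univ _⟩))).lipschitz
    (permA_mkC w)

theorem BoundedA.image_add_right (lam : Apt n) {U : Set (Apt n)} (hU : BoundedA U) :
    BoundedA ((· + lam) '' U) := by
  obtain ⟨x, rfl⟩ := mkC_surjective _ lam
  exact hU.image_of_lipschitz (IsometryEquiv.addRight x).isometry.lipschitz
    fun y => (map_add _ y x).symm

theorem mk_mkC_eq_mk_mkC {J K : Finset (Fin n)} (hJ : J.Nonempty) (hK : K.Nonempty) (h : J = K)
    {x : ↥J → ℝ} {y : ↥K → ℝ} (hxy : ∀ i (hiJ : i ∈ J) (hiK : i ∈ K), x ⟨i, hiJ⟩ = y ⟨i, hiK⟩) :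
    (⟨⟨J, hJ⟩, mkC J x⟩ : CApt n) = ⟨⟨K, hK⟩, mkC K y⟩ := by
  subst h
  obtain rfl : x = y := funext fun i => hxy i i.2 i.2
  rfl

section Compactification

variable [NeZero n]

theorem permAct_emb (w : Equiv.Perm (Fin n)) (z : Apt n) :
    permAct w (emb z) = emb (permA w z) := by
  obtain ⟨x, rfl⟩ := mkC_surjective _ z
  exact mk_mkC_eq_mk_mkC _ _ (Finset.image_univ_equiv w) fun _ _ _ => rfl

theorem transAct_emb (lam z : Apt n) : transAct lam (emb z) = emb (z + lam) := by
  show emb (z + resQ Finset.univ lam) = emb (z + lam)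
  rw [resQ_univ]

theorem permAct_inv_permAct (w : Equiv.Perm (Fin n)) (p : CApt n) :
    permAct w⁻¹ (permAct w p) = p := by
  obtain ⟨⟨J, hJ⟩, y⟩ := p
  obtain ⟨x, rfl⟩ := mkC_surjective _ y
  refine mk_mkC_eq_mk_mkC _ _ ?_ fun i _ _ => ?_
  · simp [permAct, Finset.image_image]
  · show x _ = x _
    congr 1
    ext
    simp [permIdx, Equiv.Perm.inv_def]

theorem permAct_permAct_inv (w : Equiv.Perm (Fin n)) (p : CApt n) :
    permAct w (permAct w⁻¹ p) = p := by
  simpa using permAct_inv_permAct w⁻¹ p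

theorem transAct_neg_transAct (lam : Apt n) (p : CApt n) :
    transAct (-lam) (transAct lam p) = p := by
  show (⟨p.1, p.2 + resQ p.1.1 lam + resQ p.1.1 (-lam)⟩ : CApt n) = p
  rw [map_neg, add_neg_cancel_right]
  rfl

theorem transAct_transAct_neg (lam : Apt n) (p : CApt n) :
    transAct lam (transAct (-lam) p) = p := by
  simpa using transAct_neg_transAct (-lam) p

theorem permAct_mapsTo_CUI (w : Equiv.Perm (Fin n)) (U : Set (Apt n)) (I : Finset (Fin n)) :
    Set.MapsTo (permAct w) (CUI U I) (CUI (permA w '' U) (I.image w)) := by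
  rintro ⟨⟨J, hJ⟩, y⟩ ⟨hIJ, _, ⟨u, hu, c, hc, rfl⟩, hy⟩
  dsimp only at hIJ hy
  rw [← hy]
  refine ⟨Finset.image_subset_image hIJ, permA w u + permA w c,
    Set.add_mem_add ⟨u, hu, rfl⟩ (permA_image_cone_subset w I ⟨c, hc, rfl⟩), ?_⟩
  show resQ (J.image w) (permA w u + permA w c) = permC w J (resQ J (u + c))
  rw [← map_add, permC_resQ]

theorem permAct_image_CUI (w : Equiv.Perm (Fin n)) (U : Set (Apt n)) (I : Finset (Fin n)) :
    permAct w '' CUI U I = CUI (permA w '' U) (I.image w) :=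
  Set.image_eq_of_mapsTo_of_rightInverse (permAct_mapsTo_CUI w U I)
    (by simpa [Set.image_image, Finset.image_image, permA_inv_permA] using
      permAct_mapsTo_CUI w⁻¹ (permA w '' U) (I.image w))
    (permAct_permAct_inv w)

theorem transAct_mapsTo_CUI (lam : Apt n) (U : Set (Apt n)) (I : Finset (Fin n)) :
    Set.MapsTo (transAct lam) (CUI U I) (CUI ((· + lam) '' U) I) := by
  rintro ⟨⟨J, hJ⟩, y⟩ ⟨hIJ, _, ⟨u, hu, c, hc, rfl⟩, hy⟩
  dsimp only at hIJ hy
  rw [← hy]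
  refine ⟨hIJ, u + lam + c, Set.add_mem_add ⟨u, hu, rfl⟩ hc, ?_⟩
  show resQ J (u + lam + c) = resQ J (u + c) + resQ J lam
  rw [add_right_comm, map_add]

theorem transAct_image_CUI (lam : Apt n) (U : Set (Apt n)) (I : Finset (Fin n)) :
    transAct lam '' CUI U I = CUI ((· + lam) '' U) I :=
  Set.image_eq_of_mapsTo_of_rightInverse (transAct_mapsTo_CUI lam U I)
    (by simpa only [Set.image_image, add_neg_cancel_right, Set.image_id'] using
      transAct_mapsTo_CUI (-lam) ((· + lam) '' U) I)
    (transAct_transAct_neg lam)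

theorem isOpen_emb_image {U : Set (Apt n)} (hU : IsOpen U) : IsOpen (emb '' U) :=
  TopologicalSpace.isOpen_generateFrom_of_mem (Or.inl ⟨U, hU, rfl⟩)

theorem isOpen_CUI {U : Set (Apt n)} {I : Finset (Fin n)} (hI : I.Nonempty)
    (hI_ne : I ≠ Finset.univ) (hU : IsOpen U) (hUb : BoundedA U) : IsOpen (CUI U I) :=
  TopologicalSpace.isOpen_generateFrom_of_mem (Or.inr ⟨U, I, hI, hI_ne, hU, hUb, rfl⟩)

theorem continuous_permAct (w : Equiv.Perm (Fin n)) : Continuous (permAct (n := n) w) := by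
  refine continuous_generateFrom_of_isOpen_image (permAct_permAct_inv w)
    (permAct_inv_permAct w) ?_
  rintro _ (⟨U, hU, rfl⟩ | ⟨U, I, hI, hI_ne, hU, hUb, rfl⟩)
  · rw [Set.image_image, funext (permAct_emb w⁻¹), ← Set.image_image]
    exact isOpen_emb_image (isOpen_permA_image _ hU)
  · rw [permAct_image_CUI]
    refine isOpen_CUI (hI.image _) (fun h => hI_ne ?_) (isOpen_permA_image _ hU)
      (hUb.permA_image _)
    simpa [Finset.image_image] using congrArg (Finset.image w) h

theorem continuous_transAct (lam : Apt n) : Continuous (transAct (n := n) lam) := by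
  refine continuous_generateFrom_of_isOpen_image (transAct_transAct_neg lam)
    (transAct_neg_transAct lam) ?_
  rintro _ (⟨U, hU, rfl⟩ | ⟨U, I, hI, hI_ne, hU, hUb, rfl⟩)
  · rw [Set.image_image, funext (transAct_emb (-lam)), ← Set.image_image]
    exact isOpen_emb_image (isOpenMap_add_right (-lam) U hU)
  · rw [transAct_image_CUI]
    exact isOpen_CUI hI hI_ne (isOpenMap_add_right (-lam) U hU) (hUb.image_add_right _)

end Compactification

/-- The action of `N = T ⋊ W` on `Λ` extends to a continuous action on the
compactified apartment `Λ̄`: each `w ∈ W` and each translation act continuously,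
the actions extend those on `Λ`, and on the basic open sets one has
`ν(w)(C_U^I) = C_{ν(w)(U)}^{w(I)}` and `ν(t)(C_U^I) = C_{ν(t)(U)}^I`. -/
theorem weyl_and_torus_action_continuous {n : ℕ} [NeZero n] :
    (∀ w : Equiv.Perm (Fin n), Continuous (permAct (n := n) w)) ∧
    (∀ lam : Apt n, Continuous (transAct (n := n) lam)) ∧
    (∀ (w : Equiv.Perm (Fin n)) (z : Apt n), permAct w (emb z) = emb (permA w z)) ∧
    (∀ (lam z : Apt n), transAct lam (emb z) = emb (z + lam)) ∧
    (∀ (w : Equiv.Perm (Fin n)) (U : Set (Apt n)) (I : Finset (Fin n)),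
      I.Nonempty → permAct w '' CUI U I = CUI (permA w '' U) (I.image w)) ∧
    (∀ (lam : Apt n) (U : Set (Apt n)) (I : Finset (Fin n)),
      I.Nonempty → transAct lam '' CUI U I = CUI ((fun v => v + lam) '' U) I) :=
  ⟨continuous_permAct, continuous_transAct, permAct_emb, transAct_emb,
    fun w U I _ => permAct_image_CUI w U I, fun lam U I _ => transAct_image_CUI lam U I⟩

end CompApp
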